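/- Let n = n₁ + n₂ with n₁, n₂ ≥ 2 and let ξ_{n₁n₂} be the 2-order Gray code map. Then Σ_{j=1}^{2^{n₂}−1} θ(n, ξ_{n₁n₂}^{-1}(N_{2^{n₁}} × N_j)) = 2^{n−n₂}(2^{2n₂−1} − 2^{n₂−1}), where N_m = {1,...,m}. -/

import Mathlib

open Finset

/-- Number of coordinates in which two 0-1 vectors differ. -/
def diffCount {n : ℕ} (u v : Fin n → Bool) : ℕ :=
  (Finset.univ.filter fun i => u i ≠ v i).card

/-- Adjacency in the hypercube `Q_n`: differ in exactly one coordinate. -/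
def cubeAdj {n : ℕ} (u v : Fin n → Bool) : Prop := diffCount u v = 1

instance {n : ℕ} (u v : Fin n → Bool) : Decidable (cubeAdj u v) :=
  inferInstanceAs (Decidable (diffCount u v = 1))

/-- `theta n S`: number of edges of `Q_n` with exactly one endpoint in `S`. -/
def theta (n : ℕ) (S : Finset (Fin n → Bool)) : ℕ :=
  ((Finset.univ ×ˢ Finset.univ).filter fun p : (Fin n → Bool) × (Fin n → Bool) =>
    p.1 ∈ S ∧ p.2 ∉ S ∧ cubeAdj p.1 p.2).card

/-- The reflected Gray code map `ξ_n : {0,1}^n → {1,...,2^n}`. -/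
def gray : (n : ℕ) → (Fin n → Bool) → ℕ
  | 0, _ => 1
  | n + 1, v =>
    if v 0 = false then gray n (fun i => v i.succ)
    else 2 ^ (n + 1) + 1 - gray n (fun i => v i.succ)

/-- Wirelength of an embedding `f` of `Q_n` into a host with distance `d`. -/
def wirelength {n : ℕ} {α : Type*} (d : α → α → ℕ) (f : (Fin n → Bool) → α) : ℕ :=
  (∑ u : Fin n → Bool, ∑ v : Fin n → Bool, if cubeAdj u v then d (f u) (f v) else 0) / 2

/-- Cyclic distance on the cycle with `m` vertices labeled `1,...,m`. -/
def cycDist (m a b : ℕ) : ℕ := min (Nat.dist a b) (m - Nat.dist a b)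

/-- The 2-order Gray code map. -/
def gray2 (n₁ n₂ : ℕ) (v : Fin (n₁ + n₂) → Bool) : ℕ × ℕ :=
  (gray n₁ fun i => v (Fin.castAdd n₂ i), gray n₂ fun i => v (Fin.natAdd n₁ i))

/-!
The set `ξ_{n₁n₂}⁻¹(N_{2^{n₁}} × N_j)` is the sublevel set `{v | ξ_{n₂}(tail v) ≤ j}`. Summing the
edge boundaries of the sublevel sets `{f ≤ j}` of any `f` counts each edge `uv` of `Q_n` once for
every `j` with `f u ≤ j < f v`, i.e. `|f u - f v|` times. For `f = ξ_{n₂} ∘ tail` only the edges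
inside the `2^{n₁}` copies of `Q_{n₂}` contribute, so the sum is `2^{n₁} R_{n₂}`, where `R_n` is the
total variation of `ξ_n` along the edges of `Q_n`. Splitting `Q_{n+1}` along the first coordinate,
the reflection in the definition of `ξ` gives `R_{n+1} = 2 R_n + 4^n`, so `2 R_n + 2^n = 4^n`.
-/

section Cube

variable {n : ℕ}

theorem diffCount_eq_zero {u v : Fin n → Bool} : diffCount u v = 0 ↔ u = v := by
  simp [diffCount, Finset.filter_eq_empty_iff, funext_iff]

theorem diffCount_comm (u v : Fin n → Bool) : diffCount u v = diffCount v u := by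
  simp only [diffCount, ne_comm]

theorem cubeAdj_comm {u v : Fin n → Bool} : cubeAdj u v ↔ cubeAdj v u := by
  rw [cubeAdj, cubeAdj, diffCount_comm]

theorem diffCount_cons (b b' : Bool) (t t' : Fin n → Bool) :
    diffCount (Fin.cons b t : Fin (n + 1) → Bool) (Fin.cons b' t') =
      (if b ≠ b' then 1 else 0) + diffCount t t' := by
  simp only [diffCount, Finset.card_filter, Fin.sum_univ_succ, Fin.cons_zero, Fin.cons_succ]

theorem cubeAdj_cons {b b' : Bool} {t t' : Fin n → Bool} :
    cubeAdj (Fin.cons b t : Fin (n + 1) → Bool) (Fin.cons b' t') ↔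
      (b = b' ∧ cubeAdj t t') ∨ (b ≠ b' ∧ t = t') := by
  rw [cubeAdj, cubeAdj, diffCount_cons, ← diffCount_eq_zero]
  by_cases h : b = b' <;> simp [h]

theorem diffCount_append {n₁ n₂ : ℕ} (a a' : Fin n₁ → Bool) (b b' : Fin n₂ → Bool) :
    diffCount (Fin.append a b) (Fin.append a' b') = diffCount a a' + diffCount b b' := by
  simp only [diffCount, Finset.card_filter, Fin.sum_univ_add, Fin.append_left, Fin.append_right]

theorem cubeAdj_append {n₁ n₂ : ℕ} {a a' : Fin n₁ → Bool} {b b' : Fin n₂ → Bool} :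
    cubeAdj (Fin.append a b) (Fin.append a' b') ↔
      (a = a' ∧ cubeAdj b b') ∨ (cubeAdj a a' ∧ b = b') := by
  rw [cubeAdj, cubeAdj, cubeAdj, diffCount_append, ← diffCount_eq_zero, ← diffCount_eq_zero]
  omega

theorem theta_eq_sum (S : Finset (Fin n → Bool)) :
    theta n S = ∑ u, ∑ v, if u ∈ S ∧ v ∉ S ∧ cubeAdj u v then 1 else 0 := by
  rw [theta, Finset.card_filter, Finset.sum_product]

theorem sum_cube_succ (f : (Fin (n + 1) → Bool) → ℕ) :
    ∑ v, f v = ∑ t, f (Fin.cons false t) + ∑ t, f (Fin.cons true t) := by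
  rw [← (Fin.consEquiv fun _ => Bool).sum_comp, Fintype.sum_prod_type, Fintype.sum_bool, add_comm]
  rfl

end Cube

section TotalRise

variable {n : ℕ}

/-- Thanks to truncated subtraction, each edge `uv` of `Q_n` contributes `|f u - f v|` exactly once,
from the direction in which `f` increases. -/
def totalRise (f : (Fin n → Bool) → ℕ) : ℕ :=
  ∑ u, ∑ v, if cubeAdj u v then f v - f u else 0

theorem totalRise_eq_sum_fall (f : (Fin n → Bool) → ℕ) :
    totalRise f = ∑ u, ∑ v, if cubeAdj u v then f u - f v else 0 := by
  rw [totalRise, Finset.sum_comm]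
  simp only [cubeAdj_comm]

theorem totalRise_const_tsub {M : ℕ} {f : (Fin n → Bool) → ℕ} (hf : ∀ v, f v ≤ M) :
    totalRise (fun v => M - f v) = totalRise f := by
  rw [totalRise_eq_sum_fall f, totalRise]
  refine Finset.sum_congr rfl fun u _ => Finset.sum_congr rfl fun v _ => ?_
  have := hf u; have := hf v
  split_ifs <;> omega

theorem sum_theta_sublevel_eq_totalRise {N : ℕ} (f : (Fin n → Bool) → ℕ) (hf₁ : ∀ v, 1 ≤ f v)
    (hfN : ∀ v, f v ≤ N) :
    ∑ j ∈ Icc 1 (N - 1), theta n (univ.filter fun v => f v ≤ j) = totalRise f := by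
  simp only [theta_eq_sum, mem_filter, mem_univ, true_and]
  rw [Finset.sum_comm, totalRise]
  refine Finset.sum_congr rfl fun u _ => ?_
  rw [Finset.sum_comm]
  refine Finset.sum_congr rfl fun v _ => ?_
  split_ifs with h
  · have hcount : (Icc 1 (N - 1)).filter (fun j => f u ≤ j ∧ ¬ f v ≤ j) = Ico (f u) (f v) := by
      ext j
      have := hf₁ u; have := hfN v
      simp only [mem_filter, mem_Icc, mem_Ico]
      omega
    simp only [h, and_true]
    rw [Finset.sum_boole, hcount, Nat.card_Ico, Nat.cast_id]
  · simp [h]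

theorem totalRise_cons (f : (Fin (n + 1) → Bool) → ℕ) :
    totalRise f =
      totalRise (fun t => f (Fin.cons false t)) + totalRise (fun t => f (Fin.cons true t)) +
        ∑ t, Nat.dist (f (Fin.cons false t)) (f (Fin.cons true t)) := by
  simp only [totalRise, sum_cube_succ, cubeAdj_cons, ne_eq, Bool.false_eq_true, Bool.true_eq_false,
    not_false_eq_true, not_true_eq_false, true_and, false_and, or_false, false_or, sum_ite_eq,
    mem_univ, if_true, Nat.dist, sum_add_distrib]
  ring

theorem totalRise_comp_natAdd {n₁ n₂ : ℕ} (g : (Fin n₂ → Bool) → ℕ) :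
    totalRise (fun v : Fin (n₁ + n₂) → Bool => g fun i => v (Fin.natAdd n₁ i)) =
      2 ^ n₁ * totalRise g := by
  have hsplit (F : (Fin (n₁ + n₂) → Bool) → ℕ) : ∑ v, F v = ∑ a, ∑ b, F (Fin.append a b) := by
    rw [← (Fin.appendEquiv n₁ n₂).sum_comp, Fintype.sum_prod_type]
    rfl
  have hterm (a a' : Fin n₁ → Bool) (b b' : Fin n₂ → Bool) :
      (if cubeAdj (Fin.append a b) (Fin.append a' b') then g b' - g b else 0) =
        if a = a' then (if cubeAdj b b' then g b' - g b else 0) else 0 := by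
    by_cases ha : a = a' <;> by_cases hb : b = b' <;> simp [cubeAdj_append, ha, hb]
  simp only [totalRise, hsplit, Fin.append_right, hterm]
  simp [Finset.sum_comm (γ := Fin n₁ → Bool), Finset.card_univ, Finset.mul_sum]

end TotalRise

section Gray

@[simp]
theorem gray_cons_false (n : ℕ) (t : Fin n → Bool) :
    gray (n + 1) (Fin.cons false t) = gray n t := by
  simp [gray]

@[simp]
theorem gray_cons_true (n : ℕ) (t : Fin n → Bool) :
    gray (n + 1) (Fin.cons true t) = 2 ^ (n + 1) + 1 - gray n t := by
  simp [gray]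

theorem gray_mem_Icc : ∀ (n : ℕ) (v : Fin n → Bool), gray n v ∈ Icc 1 (2 ^ n)
  | 0, _ => by simp [gray]
  | n + 1, v => by
    have := Finset.mem_Icc.mp (gray_mem_Icc n fun i => v i.succ)
    rw [Finset.mem_Icc, pow_succ]
    unfold gray
    split_ifs <;> omega

theorem one_le_gray (n : ℕ) (v : Fin n → Bool) : 1 ≤ gray n v := (mem_Icc.mp (gray_mem_Icc n v)).1

theorem gray_le (n : ℕ) (v : Fin n → Bool) : gray n v ≤ 2 ^ n := (mem_Icc.mp (gray_mem_Icc n v)).2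

theorem two_mul_sum_gray : ∀ n : ℕ, 2 * ∑ v, gray n v = 2 ^ n * (2 ^ n + 1)
  | 0 => by simp [gray]
  | n + 1 => by
    have hreflect :
        ∑ t, gray n t + ∑ t, (2 ^ (n + 1) + 1 - gray n t) = 2 ^ n * (2 ^ (n + 1) + 1) := by
      have hle (t : Fin n → Bool) : gray n t ≤ 2 ^ (n + 1) + 1 := by
        have := gray_le n t; rw [pow_succ]; omega
      rw [← sum_add_distrib, Finset.sum_congr rfl fun t _ => Nat.add_sub_cancel' (hle t)]
      simp [card_univ]
    rw [sum_cube_succ]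
    simp only [gray_cons_false, gray_cons_true, mul_add, hreflect]
    ring

theorem sum_dist_gray_reflect (n : ℕ) :
    ∑ t, Nat.dist (gray n t) (2 ^ (n + 1) + 1 - gray n t) = 4 ^ n := by
  have hpoint (t : Fin n → Bool) :
      Nat.dist (gray n t) (2 ^ (n + 1) + 1 - gray n t) + 2 * gray n t = 2 ^ (n + 1) + 1 := by
    have := gray_le n t
    rw [Nat.dist, pow_succ]
    omega
  have htotal : ∑ t, Nat.dist (gray n t) (2 ^ (n + 1) + 1 - gray n t) + 2 * ∑ t, gray n t =
      2 ^ n * (2 ^ (n + 1) + 1) := by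
    rw [mul_sum, ← sum_add_distrib, Finset.sum_congr rfl fun t _ => hpoint t]
    simp [card_univ]
  have hpow : 2 ^ n * (2 ^ (n + 1) + 1) = 2 ^ n * (2 ^ n + 1) + 4 ^ n := by
    rw [show (4 : ℕ) = 2 * 2 by rfl, mul_pow]
    ring
  rw [two_mul_sum_gray, hpow] at htotal
  omega

theorem two_mul_totalRise_gray_add : ∀ n : ℕ, 2 * totalRise (gray n) + 2 ^ n = 4 ^ n
  | 0 => by simp [totalRise, cubeAdj, diffCount]
  | n + 1 => by
    have ih := two_mul_totalRise_gray_add n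
    have hle (t : Fin n → Bool) : gray n t ≤ 2 ^ (n + 1) + 1 := by
      have := gray_le n t; rw [pow_succ]; omega
    rw [totalRise_cons]
    simp only [gray_cons_false, gray_cons_true]
    eta_reduce
    rw [totalRise_const_tsub hle, sum_dist_gray_reflect, pow_succ, pow_succ]
    omega

theorem totalRise_gray (n : ℕ) : totalRise (gray n) = 2 ^ (2 * n - 1) - 2 ^ (n - 1) := by
  have h := two_mul_totalRise_gray_add n
  cases n with
  | zero => simpa using h -- here both sides are `0`, as `2 * 0 - 1 = 0 - 1 = 0` in `ℕ`
  | succ n =>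
    have h4 : (4 : ℕ) ^ (n + 1) = 2 * 2 ^ (2 * (n + 1) - 1) := by
      rw [show 2 * (n + 1) - 1 = 2 * n + 1 by omega, show (4 : ℕ) = 2 ^ 2 by rfl, ← pow_mul]
      ring
    rw [h4, pow_succ] at h
    simp only [Nat.add_sub_cancel]
    omega

end Gray

theorem stmt11_general (n₁ n₂ : ℕ) :
    ∑ j ∈ Finset.Icc 1 (2 ^ n₂ - 1),
        theta (n₁ + n₂) (Finset.univ.filter fun v : Fin (n₁ + n₂) → Bool =>
          gray2 n₁ n₂ v ∈ (Finset.Icc 1 (2 ^ n₁)) ×ˢ Finset.Icc 1 j) =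
      2 ^ (n₁ + n₂ - n₂) * (2 ^ (2 * n₂ - 1) - 2 ^ (n₂ - 1)) := by
  have hsublevel (j : ℕ) : (univ.filter fun v : Fin (n₁ + n₂) → Bool =>
      gray2 n₁ n₂ v ∈ Icc 1 (2 ^ n₁) ×ˢ Icc 1 j) =
      univ.filter fun v => gray n₂ (fun i => v (Fin.natAdd n₁ i)) ≤ j := by
    refine Finset.filter_congr fun v _ => ?_
    have h₁ := gray_mem_Icc n₁ fun i => v (Fin.castAdd n₂ i)
    have h₂ := gray_mem_Icc n₂ fun i => v (Fin.natAdd n₁ i)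
    simp only [gray2, mem_product, mem_Icc] at h₁ h₂ ⊢
    omega
  simp only [hsublevel]
  rw [sum_theta_sublevel_eq_totalRise _ (fun v => one_le_gray _ _) (fun v => gray_le _ _),
    totalRise_comp_natAdd, totalRise_gray, Nat.add_sub_cancel]

theorem stmt11 (n₁ n₂ : ℕ) (h₁ : 2 ≤ n₁) (h₂ : 2 ≤ n₂) :
    ∑ j ∈ Finset.Icc 1 (2 ^ n₂ - 1),
        theta (n₁ + n₂) (Finset.univ.filter fun v : Fin (n₁ + n₂) → Bool =>
          gray2 n₁ n₂ v ∈ (Finset.Icc 1 (2 ^ n₁)) ×ˢ Finset.Icc 1 j) =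
      2 ^ (n₁ + n₂ - n₂) * (2 ^ (2 * n₂ - 1) - 2 ^ (n₂ - 1)) :=
  stmt11_general n₁ n₂
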